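/- Let C > 0 and let ψ : ℝ → ℝ be C² with 0 ≤ ψ ≤ 1, ψ″(r) ≥ −C for all r, ψ′(r)² ≤ C·ψ(r) for all r, and ψ(r) = 0 for all r ≥ 1. Fix n ≥ 1 and R > 0 and define g : ℝⁿ → ℝ (Euclidean space) by g(x) = ψ(‖x‖²/R²). Then for every x ∈ ℝⁿ the Laplacian of g (the trace of its Hessian, i.e. the sum of its second partial derivatives) satisfies Δg(x) ≥ −(4C + 2n·√C)/R². -/

import Mathlib

/-!
Writing `q = ‖x‖² / R²`, the chain rule gives `Δ(ψ ∘ q)(x) = (4 q ψ''(q) + 2 n ψ'(q)) / R²`.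
Where `q ≤ 1`, the hypotheses give `q ψ''(q) ≥ -C q ≥ -C` and `ψ'(q) ≥ -√(C ψ(q)) ≥ -√C`. Where `q > 1`,
`ψ` vanishes near `q`, and `(ψ')² ≤ C ψ` forces `ψ'` to vanish there too, so the Laplacian is `0`.
-/

/-- The Laplacian of `f : ℝⁿ → ℝ` at `x`: the trace of the Hessian, i.e. the sum of the
second partial derivatives in the coordinate directions. -/
noncomputable def euclideanLaplacian {n : ℕ} (f : EuclideanSpace ℝ (Fin n) → ℝ)
    (x : EuclideanSpace ℝ (Fin n)) : ℝ :=
  ∑ i : Fin n,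
    fderiv ℝ (fun y => fderiv ℝ f y (EuclideanSpace.single i (1 : ℝ))) x
      (EuclideanSpace.single i (1 : ℝ))

open RealInnerProductSpace

section RadialDerivatives

variable {E : Type*} [NormedAddCommGroup E] [InnerProductSpace ℝ E] {f : ℝ → ℝ}

theorem hasFDerivAt_norm_sq_div (a : ℝ) (y : E) :
    HasFDerivAt (fun y : E => ‖y‖ ^ 2 / a) ((2 / a) • innerSL ℝ y) y := by
  have h := (hasStrictFDerivAt_norm_sq y).hasFDerivAt.mul_const a⁻¹
  simp only [← div_eq_mul_inv] at h
  exact h.congr_fderiv (by ext; simp; ring)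

theorem fderiv_comp_norm_sq_div_apply (hf : Differentiable ℝ f) (a : ℝ) (y v : E) :
    fderiv ℝ (fun y : E => f (‖y‖ ^ 2 / a)) y v = deriv f (‖y‖ ^ 2 / a) * (2 / a * ⟪y, v⟫) := by
  have h : HasFDerivAt (fun y : E => f (‖y‖ ^ 2 / a)) _ y :=
    (hf _).hasDerivAt.comp_hasFDerivAt y (hasFDerivAt_norm_sq_div a y)
  simp [h.fderiv]

theorem fderiv_fderiv_comp_norm_sq_div_apply (hf : Differentiable ℝ f)
    (hf' : Differentiable ℝ (deriv f)) (a : ℝ) (x v : E) :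
    fderiv ℝ (fun y : E => fderiv ℝ (fun y : E => f (‖y‖ ^ 2 / a)) y v) x v =
      deriv (deriv f) (‖x‖ ^ 2 / a) * (2 / a * ⟪x, v⟫) ^ 2 +
        deriv f (‖x‖ ^ 2 / a) * (2 / a * ‖v‖ ^ 2) := by
  simp_rw [fderiv_comp_norm_sq_div_apply hf]
  have hradial : HasFDerivAt (fun y : E => deriv f (‖y‖ ^ 2 / a)) _ x :=
    (hf' _).hasDerivAt.comp_hasFDerivAt x (hasFDerivAt_norm_sq_div a x)
  have hlinear := ((innerSL ℝ v).hasFDerivAt (x := x)).const_mul (2 / a)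
  simp only [innerSL_apply_apply, real_inner_comm _ v] at hlinear
  have hproduct : HasFDerivAt (fun y : E => deriv f (‖y‖ ^ 2 / a) * (2 / a * ⟪y, v⟫)) _ x :=
    hradial.mul hlinear
  rw [hproduct.fderiv]
  simp
  ring

end RadialDerivatives

theorem euclideanLaplacian_comp_norm_sq_div {n : ℕ} {f : ℝ → ℝ} (hf : Differentiable ℝ f)
    (hf' : Differentiable ℝ (deriv f)) (a : ℝ) (x : EuclideanSpace ℝ (Fin n)) :
    euclideanLaplacian (fun y : EuclideanSpace ℝ (Fin n) => f (‖y‖ ^ 2 / a)) x =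
      (4 * (‖x‖ ^ 2 / a) * deriv (deriv f) (‖x‖ ^ 2 / a) +
        2 * n * deriv f (‖x‖ ^ 2 / a)) / a := by
  simp only [euclideanLaplacian, fderiv_fderiv_comp_norm_sq_div_apply hf hf',
    EuclideanSpace.inner_single_right, PiLp.norm_single]
  simp [Finset.sum_add_distrib, ← Finset.mul_sum, mul_pow, EuclideanSpace.norm_sq_eq]
  ring

section Cutoff

variable {ψ : ℝ → ℝ} {C : ℝ}

theorem deriv_eq_zero_of_sq_deriv_le {r : ℝ} (hψ' : deriv ψ r ^ 2 ≤ C * ψ r) (hr : ψ r = 0) :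
    deriv ψ r = 0 :=
  pow_eq_zero_iff two_ne_zero |>.mp <| le_antisymm (by simpa [hr] using hψ') (sq_nonneg _)

theorem deriv_deriv_eq_zero_of_sq_deriv_le (hψ' : ∀ r, deriv ψ r ^ 2 ≤ C * ψ r)
    (hzero : ∀ r, 1 ≤ r → ψ r = 0) {r : ℝ} (hr : 1 < r) : deriv (deriv ψ) r = 0 := by
  have hvanish : deriv ψ =ᶠ[nhds r] fun _ => 0 := by
    filter_upwards [Ioi_mem_nhds hr] with s hs
    exact deriv_eq_zero_of_sq_deriv_le (hψ' s) (hzero s hs.le)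
  simp [hvanish.deriv_eq]

theorem neg_le_four_mul_deriv_deriv_add_two_mul_deriv (hC : 0 ≤ C) (hle : ∀ r, ψ r ≤ 1)
    (hψ'' : ∀ r, -C ≤ deriv (deriv ψ) r) (hψ' : ∀ r, deriv ψ r ^ 2 ≤ C * ψ r)
    (hzero : ∀ r, 1 ≤ r → ψ r = 0) (n : ℕ) {q : ℝ} (hq : 0 ≤ q) :
    -(4 * C + 2 * n * √C) ≤ 4 * q * deriv (deriv ψ) q + 2 * n * deriv ψ q := by
  rcases le_or_gt q 1 with hq1 | hq1
  · have hsecond : -C ≤ q * deriv (deriv ψ) q := by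
      nlinarith [hψ'' q]
    have hfirst : -√C ≤ deriv ψ q :=
      Real.neg_sqrt_le_of_sq_le ((hψ' q).trans (mul_le_of_le_one_right hC (hle q)))
    nlinarith [mul_le_mul_of_nonneg_left hfirst (Nat.cast_nonneg (α := ℝ) n)]
  · rw [deriv_deriv_eq_zero_of_sq_deriv_le hψ' hzero hq1,
      deriv_eq_zero_of_sq_deriv_le (hψ' q) (hzero q hq1.le)]
    simp only [mul_zero, add_zero, neg_nonpos]
    positivity

end Cutoff

theorem laplacian_lower_bound_of_cutoff_general
    {C : ℝ} (hC : 0 < C) (ψ : ℝ → ℝ)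
    (hψ : ContDiff ℝ 2 ψ)
    (h01 : ∀ r : ℝ, 0 ≤ ψ r ∧ ψ r ≤ 1)
    (hψ'' : ∀ r : ℝ, -C ≤ deriv (deriv ψ) r)
    (hψ' : ∀ r : ℝ, (deriv ψ r) ^ 2 ≤ C * ψ r)
    (hzero : ∀ r : ℝ, 1 ≤ r → ψ r = 0)
    (n : ℕ) (R : ℝ) :
    ∀ x : EuclideanSpace ℝ (Fin n),
      -((4 * C + 2 * n * Real.sqrt C) / R ^ 2) ≤
        euclideanLaplacian (fun y : EuclideanSpace ℝ (Fin n) => ψ (‖y‖ ^ 2 / R ^ 2)) x := by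
  intro x
  rw [euclideanLaplacian_comp_norm_sq_div (hψ.differentiable two_ne_zero)
    hψ.differentiable_deriv_two, ← neg_div]
  exact div_le_div_of_nonneg_right
    (neg_le_four_mul_deriv_deriv_add_two_mul_deriv hC.le (fun r => (h01 r).2) hψ'' hψ' hzero n
      (by positivity)) (sq_nonneg R)

/-- Laplacian lower bound for the localization `g(x) = ψ(‖x‖²/R²)` built from a `C²` cutoff
`ψ` with `0 ≤ ψ ≤ 1`, `ψ'' ≥ −C`, `(ψ')² ≤ C·ψ` and `ψ = 0` on `[1,∞)`:
`Δg ≥ −(4C + 2n√C)/R²` everywhere on ℝⁿ. -/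
theorem laplacian_lower_bound_of_cutoff
    {C : ℝ} (hC : 0 < C) (ψ : ℝ → ℝ)
    (hψ : ContDiff ℝ 2 ψ)
    (h01 : ∀ r : ℝ, 0 ≤ ψ r ∧ ψ r ≤ 1)
    (hψ'' : ∀ r : ℝ, -C ≤ deriv (deriv ψ) r)
    (hψ' : ∀ r : ℝ, (deriv ψ r) ^ 2 ≤ C * ψ r)
    (hzero : ∀ r : ℝ, 1 ≤ r → ψ r = 0)
    (n : ℕ) (hn : 1 ≤ n) (R : ℝ) (hR : 0 < R) :
    ∀ x : EuclideanSpace ℝ (Fin n),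
      -((4 * C + 2 * n * Real.sqrt C) / R ^ 2) ≤
        euclideanLaplacian (fun y : EuclideanSpace ℝ (Fin n) => ψ (‖y‖ ^ 2 / R ^ 2)) x :=
  laplacian_lower_bound_of_cutoff_general hC ψ hψ h01 hψ'' hψ' hzero n R
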